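/- Let a, b be coprime positive integers and fix k with 0 ≤ k < b. Let Q ∈ P(N^b E^a) be a k-stable path (i.e., Q satisfies (R1)). Then Q is not k-skeletal if and only if there exists s ∈ {1,…,b} such that the min-level point v_s lies on Q, Q reaches v_s by an east step, and the cyclic shift Q_{v_s} is k-stable. -/

import Mathlib

/-- A lattice path is a list of steps, `true` = north step, `false` = east step.
`Q` is a path from `(0,0)` to `(a,b)` iff it has `b` norths and `a` easts. -/
def IsPath (a b : ℕ) (Q : List Bool) : Prop :=
  Q.count true = b ∧ Q.count false = a

/-- Level `a·y − b·x` of the lattice point reached after the first `m` steps. -/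
def lvlAt (a b : ℕ) (Q : List Bool) (m : ℕ) : ℤ :=
  (a : ℤ) * ((Q.take m).count true : ℤ) - (b : ℤ) * ((Q.take m).count false : ℤ)

/-- Condition (R1): the last `k+1` north steps of `Q` start at nonnegative
level (a north step at index `m` is among the last `k+1` norths iff at most `k`
norths occur strictly after it). -/
def R1 (a b k : ℕ) (Q : List Bool) : Prop :=
  ∀ m < Q.length, Q.getD m false = true → (Q.drop (m + 1)).count true ≤ k →
    0 ≤ lvlAt a b Q m

/-- `Q` is an `(a,b)`-Dyck path: every north step starts at nonnegative level. -/
def IsDyck (a b : ℕ) (Q : List Bool) : Prop :=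
  ∀ m < Q.length, Q.getD m false = true → 0 ≤ lvlAt a b Q m

/-- `Q` is `k`-skeletal: (R1) holds, and (R2) every cyclic shift of `Q` at a
lattice point of positive level fails (R1).  (The cyclic shift of `Q` at the
point reached after `m` steps is `Q.rotate m`.) -/
def SkeletalPath (a b k : ℕ) (Q : List Bool) : Prop :=
  R1 a b k Q ∧ ∀ m ≤ Q.length, 0 < lvlAt a b Q m → ¬ R1 a b k (Q.rotate m)

/-- The min-level points: `v_s = (⌊s·a/b⌋, s)` for `1 ≤ s ≤ b−1` and
`v_b = (a−1, b)`. -/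
def minLvlPt (a b s : ℕ) : ℕ × ℕ :=
  if s = b then (a - 1, b) else (s * a / b, s)

/-- The path `Q` arrives at the min-level point `v_s` by an east step, the
point `v_s` being reached after the first `m` steps of `Q`. -/
def ArrivesByEast (a b : ℕ) (Q : List Bool) (s m : ℕ) : Prop :=
  0 < m ∧ m ≤ Q.length ∧ Q.getD (m - 1) true = false ∧
    ((Q.take m).count false, (Q.take m).count true) = minLvlPt a b s

/-!
If a shift `Q_v` with `lvl v > 0` is `k`-stable, walk forward from `v` to the first point `w`
whose level is at most `b`. Relative to `v` the point `w` is a running minimum at nonpositive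
level, and shifting a `k`-stable path at such a point keeps it `k`-stable; so `Q_w` is
`k`-stable, and `0 < lvl w ≤ b` because a step lowers the level by at most `b`. A `k`-stable
path cannot end with a north step (it would start at level `-a`), so `w` is reached by an east
step. Finally, by coprimality the lattice points with `0 < lvl ≤ b` and `y ≤ b` are exactly the
min-level points, which also gives the converse.
-/

lemma exists_minLvlPt_eq_iff {a b : ℕ} (ha : 0 < a) (hab : a.Coprime b) {x y : ℕ} :
    (∃ s, 1 ≤ s ∧ s ≤ b ∧ minLvlPt a b s = (x, y)) ↔
      y ≤ b ∧ 0 < (a : ℤ) * y - b * x ∧ (a : ℤ) * y - b * x ≤ b := by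
  have not_dvd : ∀ s, 0 < s → s < b → ¬ b ∣ s * a := fun s hs0 hsb hdvd =>
    absurd (Nat.le_of_dvd hs0 (hab.symm.dvd_of_dvd_mul_right hdvd)) (by omega)
  constructor
  · rintro ⟨s, hs1, hsb, hs⟩
    unfold minLvlPt at hs
    split_ifs at hs with hsb'
    · obtain ⟨rfl, rfl⟩ := Prod.mk.inj hs
      push_cast [Nat.cast_sub ha]
      refine ⟨le_rfl, ?_, ?_⟩ <;> nlinarith
    · obtain ⟨rfl, rfl⟩ := Prod.mk.inj hs
      have hmod : ((s * a % b : ℕ) : ℤ) = (a : ℤ) * s - b * (s * a / b : ℕ) := by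
        have : ((s * a % b : ℕ) : ℤ) + b * ((s * a / b : ℕ) : ℤ) = s * a := by
          exact_mod_cast Nat.mod_add_div (s * a) b
        linarith
      have hlt := Nat.mod_lt (s * a) (show 0 < b by omega)
      have hpos := Nat.emod_pos_of_not_dvd (not_dvd s hs1 (by omega))
      exact ⟨hsb, by omega, by omega⟩
  · rintro ⟨hyb, hpos, hle⟩
    have hy0 : y ≠ 0 := by
      rintro rfl
      have : (0 : ℤ) ≤ b * x := by positivity
      simp only [Nat.cast_zero, mul_zero, zero_sub] at hpos
      omega
    rcases eq_or_lt_of_le hyb with rfl | hyb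
    · refine ⟨y, by omega, le_rfl, ?_⟩
      have hxa : x < a := by
        by_contra! h
        have : (a : ℤ) ≤ x := by exact_mod_cast h
        nlinarith
      have hax : a ≤ x + 1 := by
        by_contra! h
        have : (x : ℤ) + 2 ≤ a := by exact_mod_cast h
        nlinarith
      rw [minLvlPt, if_pos rfl, Prod.mk.injEq]
      omega
    · have hne : (a : ℤ) * y - b * x ≠ b := by
        intro h
        have : b ∣ y * a := ⟨x + 1, by zify; linarith⟩
        exact not_dvd y (by omega) hyb this
      refine ⟨y, by omega, hyb.le, ?_⟩
      simp only [minLvlPt, if_neg hyb.ne, Prod.mk.injEq, and_true]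
      apply Nat.div_eq_of_lt_le
      · zify; linarith
      · zify; lia

@[simp]
lemma lvlAt_zero (a b : ℕ) (L : List Bool) : lvlAt a b L 0 = 0 := by
  simp [lvlAt]

lemma lvlAt_add (a b : ℕ) (L : List Bool) (i j : ℕ) :
    lvlAt a b L (i + j) = lvlAt a b L i + lvlAt a b (L.drop i) j := by
  simp only [lvlAt, List.take_add, List.count_append]
  push_cast
  ring

lemma lvlAt_succ (a b : ℕ) {L : List Bool} {i : ℕ} (hi : i < L.length) :
    lvlAt a b L (i + 1) = lvlAt a b L i + if L.getD i false then (a : ℤ) else -b := by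
  rw [lvlAt_add, List.getD_eq_getElem _ _ hi, List.drop_eq_getElem_cons hi]
  cases L[i] <;> simp [lvlAt]

lemma lvlAt_sub_le_lvlAt_succ (a b : ℕ) {L : List Bool} {i : ℕ} (hi : i < L.length) :
    lvlAt a b L i - b ≤ lvlAt a b L (i + 1) := by
  rw [lvlAt_succ a b hi]
  split_ifs <;> omega

lemma lvlAt_take (a b : ℕ) (L : List Bool) {i j : ℕ} (h : i ≤ j) :
    lvlAt a b (L.take j) i = lvlAt a b L i := by
  simp only [lvlAt, List.take_take, min_eq_left h]

lemma lvlAt_append_of_le (a b : ℕ) {A : List Bool} (B : List Bool) {m : ℕ}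
    (h : m ≤ A.length) : lvlAt a b (A ++ B) m = lvlAt a b A m := by
  simp only [lvlAt, List.take_append_of_le_length h]

lemma lvlAt_append_length_add (a b : ℕ) (A B : List Bool) (i : ℕ) :
    lvlAt a b (A ++ B) (A.length + i) = lvlAt a b A A.length + lvlAt a b B i := by
  rw [lvlAt_add, lvlAt_append_of_le _ _ _ le_rfl, List.drop_left]

section

variable {a b k : ℕ}

lemma IsPath.lvlAt_length {L : List Bool} (hL : IsPath a b L) :
    lvlAt a b L L.length = 0 := by
  simp only [lvlAt, List.take_length, hL.1, hL.2]
  ring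

lemma IsPath.lvlAt_drop {L : List Bool} (hL : IsPath a b L) {j : ℕ} (hj : j ≤ L.length) :
    lvlAt a b (L.drop j) (L.length - j) = -lvlAt a b L j := by
  have := lvlAt_add a b L j (L.length - j)
  rw [Nat.add_sub_cancel' hj, hL.lvlAt_length] at this
  linarith

lemma IsPath.rotate {L : List Bool} (hL : IsPath a b L) (j : ℕ) : IsPath a b (L.rotate j) := by
  simpa only [IsPath, (L.rotate_perm j).count_eq] using hL

lemma R1.rotate_of_prefix_min {L : List Bool} (hL : IsPath a b L) (hR : R1 a b k L) {j : ℕ}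
    (hj : j ≤ L.length) (hmin : ∀ i < j, lvlAt a b L j ≤ lvlAt a b L i) :
    R1 a b k (L.rotate j) := by
  have hj0 : lvlAt a b L j ≤ 0 := by
    rcases Nat.eq_zero_or_pos j with rfl | hpos
    · simp
    · simpa using hmin 0 hpos
  rw [List.rotate_eq_drop_append_take hj]
  intro m hm hN hcnt
  have hlen : (L.drop j).length = L.length - j := List.length_drop
  rcases lt_or_ge m (L.drop j).length with hm' | hm'
  · rw [List.getD_append _ _ _ _ hm', List.getD_eq_getElem _ _ hm', List.getElem_drop,
      ← List.getD_eq_getElem _ false] at hN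
    -- the norths after `j + m` in `L` are among those after `m` in the shifted path
    rw [List.drop_append_of_le_length hm', List.count_append, List.drop_drop] at hcnt
    have := hR (j + m) (by omega) hN (le_trans (Nat.le_add_right _ _) hcnt)
    rw [lvlAt_append_of_le _ _ _ hm'.le]
    have := lvlAt_add a b L j m
    linarith
  · obtain ⟨i, rfl⟩ := Nat.exists_eq_add_of_le hm'
    have hi : i < j := by
      rw [List.length_append, hlen, List.length_take] at hm
      omega
    rw [lvlAt_append_length_add, lvlAt_take _ _ _ hi.le, hlen, hL.lvlAt_drop hj]
    linarith [hmin i hi]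

lemma exists_R1_rotate_lvlAt_pos_le {Q : List Bool} (hQ : IsPath a b Q) {m : ℕ}
    (hm : m ≤ Q.length) (hpos : 0 < lvlAt a b Q m) (hR : R1 a b k (Q.rotate m)) :
    ∃ q ≤ Q.length, 0 < lvlAt a b Q q ∧ lvlAt a b Q q ≤ b ∧ R1 a b k (Q.rotate q) := by
  classical
  have hwit : lvlAt a b Q (m + (Q.length - m)) ≤ b := by
    rw [Nat.add_sub_cancel' hm, hQ.lvlAt_length]
    positivity
  have hex : ∃ j, lvlAt a b Q (m + j) ≤ b := ⟨_, hwit⟩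
  set j := Nat.find hex
  have hjle : j ≤ Q.length - m := Nat.find_le hwit
  have habove : ∀ i < j, (b : ℤ) < lvlAt a b Q (m + i) :=
    fun i hi => not_le.1 (Nat.find_min hex hi)
  have hrot : ∀ i ≤ j, lvlAt a b (Q.rotate m) i = lvlAt a b Q (m + i) - lvlAt a b Q m := by
    intro i hi
    rw [List.rotate_eq_drop_append_take hm, lvlAt_append_of_le _ _ _ (by simp; omega),
      lvlAt_add a b Q m i]
    ring
  refine ⟨m + j, by omega, ?_, Nat.find_spec hex, ?_⟩
  · rcases Nat.eq_zero_or_pos j with hj | hj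
    · simpa [hj] using hpos
    · have := lvlAt_sub_le_lvlAt_succ a b (L := Q) (i := m + (j - 1)) (by omega)
      rw [show m + (j - 1) + 1 = m + j by omega] at this
      linarith [habove (j - 1) (by omega)]
  · rw [← List.rotate_rotate]
    refine hR.rotate_of_prefix_min (hQ.rotate m) (by simp; omega) fun i hi => ?_
    rw [hrot i hi.le, hrot j le_rfl]
    linarith [habove i hi, Nat.find_spec hex]

lemma R1.getD_last_eq_false {L : List Bool} (hL : IsPath a b L) (hR : R1 a b k L) (ha : 0 < a)
    (hlen : 0 < L.length) : L.getD (L.length - 1) false = false := by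
  by_contra hN
  rw [Bool.not_eq_false] at hN
  have hnonneg := hR (L.length - 1) (by omega) hN (by rw [Nat.sub_add_cancel hlen]; simp)
  have hstep := lvlAt_succ a b (L := L) (i := L.length - 1) (by omega)
  rw [Nat.sub_add_cancel hlen, hL.lvlAt_length, hN, if_pos rfl] at hstep
  omega

lemma getD_pred_eq_false_of_R1_rotate {Q : List Bool} (hQ : IsPath a b Q) (ha : 0 < a) {q : ℕ}
    (hq0 : 0 < q) (hq : q ≤ Q.length) (hR : R1 a b k (Q.rotate q)) :
    Q.getD (q - 1) true = false := by
  have hlast := hR.getD_last_eq_false (hQ.rotate q) ha (by simp; omega)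
  rw [List.getD_eq_getElem _ _ (by simp; omega), List.getElem_rotate] at hlast
  rw [List.getD_eq_getElem _ _ (by omega), ← hlast]
  congr 1
  rw [List.length_rotate, show Q.length - 1 + q = q - 1 + Q.length by omega, Nat.add_mod_right,
    Nat.mod_eq_of_lt (by omega)]

end

theorem not_skeletal_iff_minlvl_general (a b k : ℕ) (ha : 0 < a)
    (hab : a.Coprime b) (Q : List Bool) (hQ : IsPath a b Q)
    (hst : R1 a b k Q) :
    ¬ SkeletalPath a b k Q ↔
      ∃ s m : ℕ, 1 ≤ s ∧ s ≤ b ∧ ArrivesByEast a b Q s m ∧ R1 a b k (Q.rotate m) := by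
  constructor
  · intro hns
    obtain ⟨m, hm, hpos, hR⟩ :
        ∃ m ≤ Q.length, 0 < lvlAt a b Q m ∧ R1 a b k (Q.rotate m) := by
      by_contra! h
      exact hns ⟨hst, h⟩
    obtain ⟨q, hq, hqpos, hqb, hqR⟩ := exists_R1_rotate_lvlAt_pos_le hQ hm hpos hR
    have hq0 : 0 < q := Nat.pos_of_ne_zero fun h => by simp [h] at hqpos
    have hyb : (Q.take q).count true ≤ b := hQ.1 ▸ (List.take_sublist q Q).count_le true
    obtain ⟨s, hs1, hsb, hs⟩ := (exists_minLvlPt_eq_iff ha hab).2 ⟨hyb, hqpos, hqb⟩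
    have heast := getD_pred_eq_false_of_R1_rotate hQ ha hq0 hq hqR
    exact ⟨s, q, hs1, hsb, ⟨hq0, hq, heast, hs.symm⟩, hqR⟩
  · rintro ⟨s, m, hs1, hsb, ⟨-, hm, -, hs⟩, hR⟩ hsk
    exact hsk.2 m hm ((exists_minLvlPt_eq_iff ha hab).1 ⟨s, hs1, hsb, hs.symm⟩).2.1 hR

/-- a `k`-stable path `Q` fails to be `k`-skeletal iff some
min-level point `v_s` lies on `Q`, is reached by an east step, and the cyclic
shift of `Q` at `v_s` is `k`-stable. -/
theorem not_skeletal_iff_minlvl (a b k : ℕ) (ha : 0 < a) (hb : 0 < b)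
    (hab : a.Coprime b) (hk : k < b) (Q : List Bool) (hQ : IsPath a b Q)
    (hst : R1 a b k Q) :
    ¬ SkeletalPath a b k Q ↔
      ∃ s m : ℕ, 1 ≤ s ∧ s ≤ b ∧ ArrivesByEast a b Q s m ∧ R1 a b k (Q.rotate m) :=
  not_skeletal_iff_minlvl_general a b k ha hab Q hQ hst
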